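/- With the same data as the previous statement, det M_N = ((2N+1)²/(N+1)²)·∏_{i=0}^{N−1} (2N+4Ni−2i²+1)/(2N+1−i)². In particular det M_N > 0. -/

import Mathlib

/-- d_i = 2(i+1)/(2N−i) for i < N, d_N = 1. -/
noncomputable def dS (N i : ℕ) : ℝ :=
  if i = N then 1 else 2 * ((i : ℝ) + 1) / (2 * N - i)

/-- a_i = (i+1)/(2N−i) − i/(2N+1−i) for i < N, a_N = 1/(N+1). -/
noncomputable def aS (N i : ℕ) : ℝ :=
  if i = N then 1 / ((N : ℝ) + 1)
  else ((i : ℝ) + 1) / (2 * N - i) - (i : ℝ) / (2 * N + 1 - i)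

/-- The (k+1)×(k+1) leading principal submatrix: diagonal (d₀,…,d_k),
(i,j)-entry a_{max(i,j)} off the diagonal. -/
noncomputable def MmatS (N k : ℕ) : Matrix (Fin (k + 1)) (Fin (k + 1)) ℝ :=
  Matrix.of fun i j => if i = j then dS N i else aS N (max (i : ℕ) (j : ℕ))

/-! The matrix has an LDLᵀ factorisation `M_N = U · diag(p) · Uᵀ` with `U` unit upper triangular
and constant value `u_j = (2N+1-j)⁻¹` above the diagonal in column `j`. For such `U` the entries of
`U · diag(p) · Uᵀ` are `p_i + t_i` on the diagonal and `u_k p_k + t_k` off it (`k = max i j`),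
where `t_k = ∑_{m>k} u_m² p_m`. With the pivots `p_i = (2N+4Ni-2i²+1)/(2N-i)²` (`p_N = 1`) both
conditions hold, the first because `d_k - p_k` telescopes: its decrement from `k` to `k+1` is
`p_{k+1}/(2N-k)²`. Hence `det M_N = ∏ p_i`, every pivot is positive, and the product of the
pivots telescopes to the stated closed form. -/

open Matrix Finset

section LDL

variable {ι R : Type*} [Fintype ι] [LinearOrder ι] [CommRing R]

def colStrictUpper (u : ι → R) : Matrix ι ι R :=
  of fun i j => if i < j then u j else 0

theorem det_one_add_colStrictUpper (u : ι → R) : det (1 + colStrictUpper u) = 1 := by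
  rw [det_of_isUpperTriangular]
  · simp [colStrictUpper]
  · intro i j (hji : j < i)
    simp [colStrictUpper, one_apply, hji.ne', hji.not_gt]

variable [LocallyFiniteOrderTop ι]

theorem colStrictUpper_mul_diagonal_mul_transpose_apply (u p : ι → R) (i j : ι) :
    (colStrictUpper u * diagonal p * (colStrictUpper u)ᵀ) i j
      = ∑ m ∈ Ioi (max i j), u m ^ 2 * p m := by
  rw [mul_apply, ← filter_lt_eq_Ioi, sum_filter]
  refine sum_congr rfl fun m _ => ?_
  simp only [mul_diagonal, transpose_apply, colStrictUpper, of_apply, max_lt_iff]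
  split_ifs <;> simp_all [sq, mul_comm, mul_left_comm]

theorem det_of_eq_tail_sums (d a u p : ι → R)
    (hd : ∀ i, d i = p i + ∑ m ∈ Ioi i, u m ^ 2 * p m)
    (ha : ∀ i, a i = u i * p i + ∑ m ∈ Ioi i, u m ^ 2 * p m) :
    (of fun i j => if i = j then d i else a (max i j)).det = ∏ i, p i := by
  have hLDL : (of fun i j => if i = j then d i else a (max i j))
      = (1 + colStrictUpper u) * diagonal p * (1 + colStrictUpper u)ᵀ := by
    ext i j
    simp only [add_mul, mul_add, transpose_add, transpose_one, one_mul, mul_one, Matrix.add_apply,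
      colStrictUpper_mul_diagonal_mul_transpose_apply]
    simp only [diagonal_mul, mul_diagonal, transpose_apply, diagonal_apply, colStrictUpper, of_apply]
    rcases lt_trichotomy i j with h | rfl | h
    · simp [h, h.ne, h.not_gt, h.le, ha, mul_comm]
    · simp [hd]
    · simp [h, h.ne', h.not_gt, h.le, ha, mul_comm]
  rw [hLDL, det_mul, det_mul, det_transpose, det_one_add_colStrictUpper, det_diagonal,
    one_mul, mul_one]

end LDL

noncomputable def pivot (N i : ℕ) : ℝ :=
  if i = N then 1
  else (2 * (N : ℝ) + 4 * N * i - 2 * (i : ℝ) ^ 2 + 1) / (2 * N - i) ^ 2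

theorem dS_sub_pivot_self (N : ℕ) : dS N N - pivot N N = 0 := by
  simp [dS, pivot]

theorem dS_sub_pivot_succ {N k : ℕ} (hk : k < N) :
    dS N k - pivot N k
      = pivot N (k + 1) / (2 * N + 1 - ((k + 1 : ℕ) : ℝ)) ^ 2 + (dS N (k + 1) - pivot N (k + 1)) := by
  have hkR : (k : ℝ) + 1 ≤ N := by exact_mod_cast hk
  have h₁ : (2 * N - k : ℝ) ≠ 0 := by linarith
  have h₂ : (2 * N + 1 - (k + 1) : ℝ) ≠ 0 := by linarith
  simp only [dS, pivot, if_neg hk.ne]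
  push_cast
  rcases Nat.lt_or_eq_of_le (Nat.succ_le_of_lt hk) with hk' | rfl
  · have h₃ : (2 * N - (k + 1) : ℝ) ≠ 0 := by
      have : (k : ℝ) + 1 < N := by exact_mod_cast hk'
      linarith
    simp only [if_neg hk'.ne]
    field_simp
    ring
  · simp only [if_true]
    push_cast
    field_simp
    ring

theorem sum_Ioo_pivot_div_sq {N k : ℕ} (hk : k ≤ N) :
    ∑ m ∈ Ioo k (N + 1), pivot N m / (2 * N + 1 - m) ^ 2 = dS N k - pivot N k := by
  rw [← Ico_succ_left_eq_Ioo, Order.succ_eq_add_one]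
  induction hk using Nat.decreasingInduction with
  | self => simp [dS_sub_pivot_self]
  | of_succ k hk ih =>
    rw [sum_eq_sum_Ico_succ_bot (by omega), ih, dS_sub_pivot_succ hk]

theorem aS_eq_inv_mul_pivot_add {N j : ℕ} (hj : j ≤ N) :
    aS N j = (2 * N + 1 - j : ℝ)⁻¹ * pivot N j + (dS N j - pivot N j) := by
  rcases hj.lt_or_eq with hj | rfl
  · have hjR : (j : ℝ) + 1 ≤ N := by exact_mod_cast hj
    have h₁ : (2 * N - j : ℝ) ≠ 0 := by linarith
    have h₂ : (2 * N + 1 - j : ℝ) ≠ 0 := by linarith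
    simp only [aS, dS, pivot, if_neg hj.ne]
    field_simp
    ring
  · simp only [aS, dS, pivot, if_true]
    rw [show (2 * j + 1 - j : ℝ) = j + 1 by ring]
    ring

theorem pivot_pos {N i : ℕ} (hi : i ≤ N) : 0 < pivot N i := by
  rcases hi.lt_or_eq with hi | rfl
  · have hiR : (i : ℝ) + 1 ≤ N := by exact_mod_cast hi
    have h₀ : (0 : ℝ) ≤ i := i.cast_nonneg
    rw [pivot, if_neg hi.ne]
    apply div_pos
    · nlinarith
    · have : (0 : ℝ) < 2 * N - i := by linarith
      positivity
  · simp [pivot]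

theorem prod_range_pivot {N n : ℕ} (hn : n ≤ N) :
    ∏ i ∈ range n, pivot N i
      = (2 * (N : ℝ) + 1) ^ 2 / (2 * N + 1 - n) ^ 2 *
        ∏ i ∈ range n, (2 * (N : ℝ) + 4 * N * i - 2 * (i : ℝ) ^ 2 + 1) / (2 * N + 1 - i) ^ 2 := by
  induction n with
  | zero => simp [div_self (by positivity : (2 * (N : ℝ) + 1) ^ 2 ≠ 0)]
  | succ n ih =>
    have hnR : (n : ℝ) + 1 ≤ N := by exact_mod_cast hn
    have h₁ : (2 * N - n : ℝ) ≠ 0 := by linarith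
    have h₂ : (2 * N + 1 - n : ℝ) ≠ 0 := by linarith
    have h₃ : (2 * N + 1 - (n + 1) : ℝ) ≠ 0 := by linarith
    rw [prod_range_succ, prod_range_succ, ih (by omega), pivot, if_neg (by omega)]
    push_cast
    field_simp
    ring

theorem Fin.sum_Ioi_eq_sum_Ioo {M : Type*} [AddCommMonoid M] {n : ℕ} (f : ℕ → M) (a : Fin n) :
    ∑ m ∈ Ioi a, f m = ∑ m ∈ Ioo (a : ℕ) n, f m := by
  rw [← Fin.map_valEmbedding_Ioi, sum_map]
  rfl

theorem det_MmatS_eq_prod_pivot (N : ℕ) : (MmatS N N).det = ∏ i ∈ range (N + 1), pivot N i := by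
  have htail (i : Fin (N + 1)) :
      ∑ m ∈ Ioi i, (2 * N + 1 - ((m : ℕ) : ℝ))⁻¹ ^ 2 * pivot N m = dS N i - pivot N i := by
    rw [Fin.sum_Ioi_eq_sum_Ioo (fun m => (2 * N + 1 - (m : ℝ))⁻¹ ^ 2 * pivot N m)]
    simp only [inv_pow, inv_mul_eq_div]
    exact sum_Ioo_pivot_div_sq (Nat.le_of_lt_succ i.isLt)
  rw [← Fin.prod_univ_eq_prod_range (pivot N)]
  refine det_of_eq_tail_sums (fun i : Fin (N + 1) => dS N i) (fun i => aS N i)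
    (fun i => (2 * N + 1 - ((i : ℕ) : ℝ))⁻¹) (fun i => pivot N i) (fun i => ?_) (fun i => ?_)
  · rw [htail]; ring
  · rw [htail]; exact aS_eq_inv_mul_pivot_add (Nat.le_of_lt_succ i.isLt)

theorem det_MN_closed_form_general (N : ℕ) :
    (MmatS N N).det =
      ((2 * (N : ℝ) + 1) ^ 2 / ((N : ℝ) + 1) ^ 2) *
      ∏ i ∈ Finset.range N,
          (2 * (N : ℝ) + 4 * N * i - 2 * (i : ℝ) ^ 2 + 1) / (2 * N + 1 - i) ^ 2 ∧
    0 < (MmatS N N).det := by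
  rw [det_MmatS_eq_prod_pivot]
  refine ⟨?_, prod_pos fun i hi => pivot_pos (Nat.le_of_lt_succ (mem_range.mp hi))⟩
  rw [prod_range_succ, prod_range_pivot le_rfl, pivot, if_pos rfl, mul_one,
    show (2 * N + 1 - N : ℝ) = N + 1 by ring]

theorem det_MN_closed_form (N : ℕ) (hN : 1 ≤ N) :
    (MmatS N N).det =
      ((2 * (N : ℝ) + 1) ^ 2 / ((N : ℝ) + 1) ^ 2) *
      ∏ i ∈ Finset.range N,
          (2 * (N : ℝ) + 4 * N * i - 2 * (i : ℝ) ^ 2 + 1) / (2 * N + 1 - i) ^ 2 ∧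
    0 < (MmatS N N).det :=
  det_MN_closed_form_general N
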